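/- Let n ≥ 8 be an even integer. For every 0 ≤ j ≤ n−1, the line L_j contains at least ⌊n/3⌋ points of ℬ_n; that is, the finite set ℬ_n ∩ L_j has cardinality at least ⌊n/3⌋. -/

import Mathlib

open Complex

/-- `P n j = exp(2πij/n)`. -/
noncomputable def Ppt (n j : ℕ) : ℂ := Complex.exp (2 * Real.pi * Complex.I * j / n)

/-- `Q n j = -exp(-4πij/n)`. -/
noncomputable def Qpt (n j : ℕ) : ℂ := -Complex.exp (-(4 * Real.pi * Complex.I * j) / n)

open scoped Classical in
/-- The `j`-th line of the Böröczky configuration: the line through `P n j` and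
`Q n j` if they are distinct, and the tangent line to the unit circle at `P n j`
otherwise (identifying ℝ² with ℂ). -/
noncomputable def Bline (n j : ℕ) : Set ℂ :=
  if Ppt n j = Qpt n j then
    {z : ℂ | (z * (starRingEnd ℂ) (Ppt n j)).re = 1}
  else
    {z : ℂ | ((z - Ppt n j) * (starRingEnd ℂ) (Qpt n j - Ppt n j)).im = 0}

/-- The set of triple points of the Böröczky configuration: points lying on at
least three of the lines `L_0, …, L_{n-1}`. -/
def TriplePts (n : ℕ) : Set ℂ :=
  {z : ℂ | 3 ≤ ({j : ℕ | j < n ∧ z ∈ Bline n j} : Set ℕ).ncard}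

/-! With `ω = exp (2πi/n)`, the line `L_j` is `{z | z - ω⁻ʲ z̄ = ωʲ - ω⁻²ʲ}`, so whenever
`a + b + c ≡ 0 (mod n)` the point `ωᵃ + ωᵇ + ωᶜ` lies on `L_a`, `L_b` and `L_c`.
Take `a = j`: at least `n - 4` residues `k` make `j`, `k`, `-j - k` pairwise
distinct, and the point `ωʲ + ωᵏ + ω⁻ʲ⁻ᵏ` determines `{ωᵏ, ω⁻ʲ⁻ᵏ}` as the roots
of a quadratic (sum and product `ω⁻ʲ` are known). So `L_j` carries at least
`(n - 4) / 2` triple points, hence at least `⌊n/3⌋` once `n ≥ 8`. They are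
finitely many because two distinct lines meet at most once. -/

open ComplexConjugate

lemma Circle.coe_mul_conj (u : Circle) : (u : ℂ) * conj (u : ℂ) = 1 := by
  rw [← Circle.coe_inv_eq_conj, ← Circle.coe_mul, mul_inv_cancel, Circle.coe_one]

lemma Circle.conj_mul_conj_eq_of_mul_eq_one {u v w : Circle} (h : u * v * w = 1) :
    conj (u : ℂ) * conj (v : ℂ) = w := by
  rw [← Circle.coe_inv_eq_conj, ← Circle.coe_inv_eq_conj, ← Circle.coe_mul, ← mul_inv,
    ← eq_inv_of_mul_eq_one_right h]

lemma Complex.re_eq_one_iff_add_conj_eq_two {w : ℂ} : w.re = 1 ↔ w + conj w = 2 := by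
  rw [add_conj, ← ofReal_ofNat, ofReal_inj]
  constructor <;> intro h <;> linarith

lemma eq_or_eq_of_add_eq_of_mul_eq {R : Type*} [CommRing R] [IsDomain R] {a b c d : R}
    (hs : a + b = c + d) (hp : a * b = c * d) : c = a ∨ c = b := by
  have h : (c - a) * (c - b) = 0 := by linear_combination (-c) * hs + hp
  rcases mul_eq_zero.1 h with h | h
  · exact .inl (sub_eq_zero.1 h)
  · exact .inr (sub_eq_zero.1 h)

open Finset in
lemma card_filter_nsmul_eq_le {α : Type*} [AddCommGroup α] [Fintype α] [DecidableEq α]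
    [IsAddCyclic α] {m : ℕ} (hm : 0 < m) (c : α) : #{k | m • k = c} ≤ m := by
  by_cases hc : ∃ k₀, m • k₀ = c
  · obtain ⟨k₀, rfl⟩ := hc
    refine (card_le_card_of_injOn (· - k₀) (fun k hk => ?_) sub_left_injective.injOn).trans
      (IsAddCyclic.card_nsmul_eq_zero_le hm)
    simp_all [nsmul_sub]
  · simp_all

-- The line through `u` and `-ū²`, or the tangent to the unit circle at `u` if they coincide.
def boroczkyLine (u : Circle) : Set ℂ :=
  {z | z - conj (u : ℂ) * conj z = u - conj (u : ℂ) ^ 2}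

lemma setOf_re_mul_conj_eq_one_eq_boroczkyLine {u : Circle} (hu : (u : ℂ) = -conj (u : ℂ) ^ 2) :
    {z : ℂ | (z * conj (u : ℂ)).re = 1} = boroczkyLine u := by
  have hu' : (u : ℂ) + conj (u : ℂ) ^ 2 = 0 := by linear_combination hu
  have h1 := u.coe_mul_conj
  ext z
  simp only [Set.mem_ofPred_eq, boroczkyLine, re_eq_one_iff_add_conj_eq_two, map_mul, conj_conj]
  constructor <;> intro h
  · linear_combination (u : ℂ) * h + (conj z * conj (u : ℂ) - z) * h1
      + (1 - conj z * u) * hu'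
  · linear_combination (conj (u : ℂ)) * h + (conj z - conj (u : ℂ)) * hu' + 2 * h1

lemma setOf_im_eq_zero_eq_boroczkyLine {u : Circle} (hu : (u : ℂ) ≠ -conj (u : ℂ) ^ 2) :
    {z : ℂ | ((z - u) * conj (-conj (u : ℂ) ^ 2 - u)).im = 0} = boroczkyLine u := by
  have h1 := u.coe_mul_conj
  have hc : (u : ℂ) ^ 2 + conj (u : ℂ) ≠ 0 := by
    intro h
    apply hu
    have := congrArg conj h
    simp only [map_add, map_pow, conj_conj, map_zero] at this
    linear_combination this
  ext z
  have key : (conj z - conj (u : ℂ)) * (-conj (u : ℂ) ^ 2 - u)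
        - (z - u) * (-(u : ℂ) ^ 2 - conj (u : ℂ))
      = ((u : ℂ) ^ 2 + conj (u : ℂ)) * (z - conj (u : ℂ) * conj z - (u - conj (u : ℂ) ^ 2)) := by
    linear_combination ((u : ℂ) * (conj z - conj (u : ℂ))) * h1
  simp only [Set.mem_ofPred_eq, boroczkyLine, ← conj_eq_iff_im, map_mul, map_sub, map_neg,
    map_pow, conj_conj]
  rw [← sub_eq_zero, key, mul_eq_zero, or_iff_right hc, sub_eq_zero]

lemma add_add_mem_boroczkyLine {u v w : Circle} (h : u * v * w = 1) :
    (u + v + w : ℂ) ∈ boroczkyLine u := by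
  have hv : conj (u : ℂ) * conj (w : ℂ) = v :=
    Circle.conj_mul_conj_eq_of_mul_eq_one (by rw [mul_right_comm, h])
  have hw := Circle.conj_mul_conj_eq_of_mul_eq_one h
  simp only [boroczkyLine, Set.mem_ofPred_eq, map_add]
  linear_combination -hv - hw

lemma boroczkyLine_inter_subsingleton {u v : Circle} (huv : u ≠ v) :
    (boroczkyLine u ∩ boroczkyLine v).Subsingleton := by
  intro z hz z' hz'
  simp only [boroczkyLine, Set.mem_inter_iff, Set.mem_ofPred_eq] at hz hz'
  obtain ⟨hzu, hzv⟩ := hz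
  obtain ⟨hz'u, hz'v⟩ := hz'
  have hconj : conj (u : ℂ) - conj (v : ℂ) ≠ 0 :=
    sub_ne_zero.2 ((RingHom.injective _).ne (Circle.coe_injective.ne huv))
  have h : (conj (u : ℂ) - conj (v : ℂ)) * (conj z - conj z') = 0 := by
    linear_combination -hzu + hz'u + hzv - hz'v
  have hzz' : conj z = conj z' := sub_eq_zero.1 ((mul_eq_zero.1 h).resolve_left hconj)
  linear_combination hzu - hz'u + conj (u : ℂ) * hzz'

section ZMod

variable {n : ℕ} [NeZero n]

lemma Ppt_eq_toCircle (j : ℕ) : Ppt n j = ZMod.toCircle (j : ZMod n) :=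
  (ZMod.toCircle_natCast j).symm

lemma Qpt_eq_neg_conj_sq (j : ℕ) : Qpt n j = -conj (ZMod.toCircle (j : ZMod n) : ℂ) ^ 2 := by
  rw [Qpt, ZMod.toCircle_natCast, ← exp_conj, ← exp_nat_mul]
  congr 2
  simp only [Nat.cast_ofNat, map_div₀, map_mul, map_ofNat, conj_ofReal, conj_I, mul_neg,
    map_natCast, neg_mul]
  ring

lemma Bline_eq_boroczkyLine (j : ℕ) :
    Bline n j = boroczkyLine (ZMod.toCircle (j : ZMod n)) := by
  rw [Bline, Ppt_eq_toCircle, Qpt_eq_neg_conj_sq]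
  split_ifs with h
  · exact setOf_re_mul_conj_eq_one_eq_boroczkyLine h
  · exact setOf_im_eq_zero_eq_boroczkyLine h

lemma Bline_val (a : ZMod n) : Bline n a.val = boroczkyLine (ZMod.toCircle a) := by
  rw [Bline_eq_boroczkyLine, ZMod.natCast_zmod_val]

lemma toCircle_add_add_mem_Bline {a b c : ZMod n} (h : a + b + c = 0) :
    (ZMod.toCircle a + ZMod.toCircle b + ZMod.toCircle c : ℂ) ∈ Bline n a.val := by
  rw [Bline_val]
  apply add_add_mem_boroczkyLine
  rw [← AddChar.map_add_eq_mul, ← AddChar.map_add_eq_mul, h, AddChar.map_zero_eq_one]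

lemma toCircle_add_add_mem_TriplePts {a b c : ZMod n} (hab : a ≠ b) (hac : a ≠ c) (hbc : b ≠ c)
    (h : a + b + c = 0) :
    (ZMod.toCircle a + ZMod.toCircle b + ZMod.toCircle c : ℂ) ∈ TriplePts n := by
  set z : ℂ := ZMod.toCircle a + ZMod.toCircle b + ZMod.toCircle c
  have hsub : {a.val, b.val, c.val} ⊆ {i : ℕ | i < n ∧ z ∈ Bline n i} := by
    rintro i (rfl | rfl | rfl)
    · exact ⟨ZMod.val_lt a, toCircle_add_add_mem_Bline h⟩
    · refine ⟨ZMod.val_lt b, ?_⟩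
      convert toCircle_add_add_mem_Bline (show b + a + c = 0 by rw [← h]; ring) using 1
      ring
    · refine ⟨ZMod.val_lt c, ?_⟩
      convert toCircle_add_add_mem_Bline (show c + a + b = 0 by rw [← h]; ring) using 1
      ring
  have hcard : ({a.val, b.val, c.val} : Set ℕ).ncard = 3 := by
    have hval : ∀ {x y : ZMod n}, x ≠ y → x.val ≠ y.val := (ZMod.val_injective n).ne
    exact Set.ncard_eq_three.2 ⟨_, _, _, hval hab, hval hac, hval hbc, rfl⟩
  rw [TriplePts, Set.mem_ofPred_eq, ← hcard]
  exact Set.ncard_le_ncard hsub ((Set.finite_lt_nat n).subset fun i hi => hi.1)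

end ZMod

lemma Bline_inter_subsingleton {n i j : ℕ} (hi : i < n) (hj : j < n) (hij : i ≠ j) :
    (Bline n i ∩ Bline n j).Subsingleton := by
  have : NeZero n := ⟨by omega⟩
  rw [Bline_eq_boroczkyLine, Bline_eq_boroczkyLine]
  refine boroczkyLine_inter_subsingleton (ZMod.injective_toCircle.ne fun h => hij ?_)
  rw [← ZMod.val_natCast_of_lt hi, h, ZMod.val_natCast_of_lt hj]

lemma TriplePts_finite (n : ℕ) : (TriplePts n).Finite := by
  have hpairs : {p : ℕ × ℕ | p.1 < n ∧ p.2 < n ∧ p.1 ≠ p.2}.Finite :=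
    ((Set.finite_lt_nat n).prod (Set.finite_lt_nat n)).subset fun p hp => ⟨hp.1, hp.2.1⟩
  refine (hpairs.biUnion fun p hp =>
    (Bline_inter_subsingleton hp.1 hp.2.1 hp.2.2).finite).subset fun z hz => ?_
  set I := {i : ℕ | i < n ∧ z ∈ Bline n i}
  have h3 : 3 ≤ I.ncard := hz
  obtain ⟨i, hi⟩ := Set.nonempty_of_ncard_ne_zero (s := I) (by omega)
  obtain ⟨i', hi', hne⟩ := Set.exists_ne_of_one_lt_ncard (s := I) (by omega) i
  exact Set.mem_biUnion (x := (i', i)) ⟨hi'.1, hi.1, hne⟩ ⟨hi'.2, hi.2⟩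

section Counting

variable {n : ℕ} [NeZero n]

lemma eq_or_eq_neg_sub_of_toCircle_add_eq {a k k' : ZMod n}
    (h : (ZMod.toCircle k + ZMod.toCircle (-a - k) : ℂ) =
      ZMod.toCircle k' + ZMod.toCircle (-a - k')) :
    k' = k ∨ k' = -a - k := by
  have hprod (k : ZMod n) :
      (ZMod.toCircle k * ZMod.toCircle (-a - k) : ℂ) = ZMod.toCircle (-a) := by
    rw [← Circle.coe_mul, ← AddChar.map_add_eq_mul, add_sub_cancel]
  have := eq_or_eq_of_add_eq_of_mul_eq h ((hprod k).trans (hprod k').symm)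
  simpa only [Circle.coe_inj, ZMod.injective_toCircle.eq_iff] using this

open Finset in
lemma sub_four_le_card_filter (a : ZMod n) :
    n - 4 ≤ #{k : ZMod n | k ≠ a ∧ -a - k ≠ a ∧ -a - k ≠ k} := by
  have hcover : (univ : Finset (ZMod n)) ⊆
      ({k | k ≠ a ∧ -a - k ≠ a ∧ -a - k ≠ k} : Finset _) ∪
        ({a, -a - a} ∪ ({k | 2 • k = -a} : Finset _)) := by
    intro k _
    simp only [mem_union, mem_filter, mem_univ, true_and, mem_insert, mem_singleton, two_nsmul]
    grind
  calc n - 4 ≤ #(univ : Finset (ZMod n)) - 4 := by rw [card_univ, ZMod.card]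
    _ ≤ _ := by
      have hgood := (card_le_card hcover).trans (card_union_le _ _)
      have hbad := (card_union_le {a, -a - a} _).trans
        (add_le_add card_le_two (card_filter_nsmul_eq_le two_pos (-a)))
      omega

open Finset in
lemma sub_four_le_two_mul_ncard_TriplePts_inter_Bline (a : ZMod n) :
    n - 4 ≤ 2 * (TriplePts n ∩ Bline n a.val).ncard := by
  set f : ZMod n → ℂ := fun k => ZMod.toCircle a + ZMod.toCircle k + ZMod.toCircle (-a - k)
  set G : Finset (ZMod n) := {k | k ≠ a ∧ -a - k ≠ a ∧ -a - k ≠ k}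
  have hmaps : ↑(G.image f) ⊆ TriplePts n ∩ Bline n a.val := by
    intro z hz
    obtain ⟨k, hk, rfl⟩ := mem_image.1 hz
    obtain ⟨hka, hma, hmk⟩ := (mem_filter.1 hk).2
    have hsum : a + k + (-a - k) = 0 := by ring
    exact ⟨toCircle_add_add_mem_TriplePts hka.symm hma.symm hmk.symm hsum,
      toCircle_add_add_mem_Bline hsum⟩
  have hfiber : ∀ z ∈ G.image f, #{k ∈ G | f k = z} ≤ 2 := by
    intro z hz
    obtain ⟨k, -, rfl⟩ := mem_image.1 hz
    refine (card_le_card (t := {k, -a - k}) fun k' hk' => ?_).trans card_le_two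
    have hk'eq : f k = f k' := (mem_filter.1 hk').2.symm
    simp only [f, add_assoc, add_right_inj] at hk'eq
    simpa only [mem_insert, mem_singleton] using eq_or_eq_neg_sub_of_toCircle_add_eq hk'eq
  calc n - 4 ≤ #G := sub_four_le_card_filter a
    _ ≤ 2 * #(G.image f) := card_le_mul_card_image G 2 hfiber
    _ ≤ 2 * (TriplePts n ∩ Bline n a.val).ncard := by
      rw [← Set.ncard_coe_finset]
      exact Nat.mul_le_mul_left 2
        (Set.ncard_le_ncard hmaps ((TriplePts_finite n).inter_of_left _))

end Counting

theorem boroczky_points_on_line_general (n : ℕ) (hn : 8 ≤ n) :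
    ∀ j, j < n →
      (TriplePts n ∩ Bline n j).Finite ∧ n / 3 ≤ (TriplePts n ∩ Bline n j).ncard := by
  intro j hj
  have : NeZero n := ⟨by omega⟩
  have hcount := sub_four_le_two_mul_ncard_TriplePts_inter_Bline (j : ZMod n)
  rw [ZMod.val_natCast_of_lt hj] at hcount
  exact ⟨(TriplePts_finite n).inter_of_left _, by omega⟩

/-- For even `n ≥ 8`, every line of the Böröczky configuration contains at
least `⌊n/3⌋` triple points. -/
theorem boroczky_points_on_line (n : ℕ) (hn : 8 ≤ n) (heven : Even n) :
    ∀ j, j < n →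
      (TriplePts n ∩ Bline n j).Finite ∧ n / 3 ≤ (TriplePts n ∩ Bline n j).ncard :=
  boroczky_points_on_line_general n hn
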